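/- arXiv:1910.05272 — 3 statements merged into one kernel-verified Lean document; each statement's English description precedes it below -/
import Mathlib

section
/- Let t_n denote the number of independent dominating sets of the chain triangular cactus T_n. Then for every n ≥ 1, t_n equals the Fibonacci number F_{n+3} (with F_0 = 0, F_1 = 1). -/
/-- `S` is an independent dominating set of `G`: pairwise non-adjacent, and every
vertex outside `S` has a neighbour in `S`. -/
def IsIndepDomSet {V : Type*} (G : SimpleGraph V) (S : Finset V) : Prop :=
  (∀ v ∈ S, ∀ w ∈ S, ¬ G.Adj v w) ∧ ∀ v, v ∉ S → ∃ w ∈ S, G.Adj v w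

/-- The chain triangular cactus `T n`: vertices `Sum.inl i` are `x i`
(`0 ≤ i ≤ n`) and `Sum.inr k` is `y (k+1)` (`0 ≤ k ≤ n-1`); the `i`-th triangle
(`1 ≤ i ≤ n`) has vertices `x (i-1)`, `x i`, `y i`. -/
def triChain (n : ℕ) : SimpleGraph (Fin (n + 1) ⊕ Fin n) :=
  SimpleGraph.fromRel fun p q =>
    match p, q with
    | Sum.inl i, Sum.inl j => (i : ℕ) + 1 = (j : ℕ)
    | Sum.inl i, Sum.inr k => (i : ℕ) = (k : ℕ) ∨ (i : ℕ) = (k : ℕ) + 1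
    | _, _ => False

/-- The number of independent dominating sets of the chain triangular cactus `T n`. -/
noncomputable def numIDSTri (n : ℕ) : ℕ :=
  Nat.card {S : Finset (Fin (n + 1) ⊕ Fin n) // IsIndepDomSet (triChain n) S}

/-!
An independent dominating set `S` of `T n` is determined by the set `A` of path vertices `x i`
it contains: `A` has no two consecutive indices, and `S` contains exactly the apexes `y i` whose
triangle meets `A` in no vertex (independence forbids the others, domination of `y i` forces these).
Conversely every such set is dominating, since for `n ≥ 1` each vertex lies in a triangle, which is
a clique meeting `S`. Subsets of `{0, …, n}` without two consecutive elements are counted by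
`F (n + 3)`: splitting on whether the largest admissible element is present gives the Fibonacci
recursion.
-/

open Finset

def sparseSubsets (m : ℕ) : Finset (Finset ℕ) :=
  {A ∈ (range m).powerset | ∀ i ∈ A, i + 1 ∉ A}

lemma mem_sparseSubsets {m : ℕ} {A : Finset ℕ} :
    A ∈ sparseSubsets m ↔ A ⊆ range m ∧ ∀ i ∈ A, i + 1 ∉ A := by
  simp [sparseSubsets]

lemma sparseSubsets_add_two (m : ℕ) :
    sparseSubsets (m + 2) = sparseSubsets (m + 1) ∪ (sparseSubsets m).image (insert (m + 1)) := by
  ext A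
  simp only [mem_union, mem_image, mem_sparseSubsets, subset_iff, mem_range]
  constructor
  · rintro ⟨hlt, hsp⟩
    by_cases hm : m + 1 ∈ A
    · exact .inr ⟨A.erase (m + 1), ⟨fun i hi => by grind, fun i hi => by grind⟩, insert_erase hm⟩
    · exact .inl ⟨fun i hi => by grind, hsp⟩
  · rintro (⟨hlt, hsp⟩ | ⟨B, ⟨hlt, hsp⟩, rfl⟩)
    · exact ⟨fun i hi => by grind, hsp⟩
    · grind

lemma card_sparseSubsets_add_two (m : ℕ) :
    #(sparseSubsets (m + 2)) = #(sparseSubsets (m + 1)) + #(sparseSubsets m) := by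
  have hlt : ∀ A ∈ sparseSubsets m, m + 1 ∉ A := fun A hA h => by
    simpa using (mem_sparseSubsets.1 hA).1 h
  rw [sparseSubsets_add_two, card_union_of_disjoint, card_image_of_injOn]
  · intro A hA B hB h
    simpa [erase_insert (hlt A hA), erase_insert (hlt B hB)] using congrArg (erase · (m + 1)) h
  · rw [disjoint_right]
    rintro _ hA h
    obtain ⟨B, -, rfl⟩ := mem_image.1 hA
    simpa using (mem_sparseSubsets.1 h).1 (mem_insert_self _ _)

theorem card_sparseSubsets (m : ℕ) : #(sparseSubsets m) = Nat.fib (m + 2) := by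
  induction m using Nat.twoStepInduction with
  | zero => decide
  | one => decide
  | more m ih₀ ih₁ =>
    rw [card_sparseSubsets_add_two, ih₀, ih₁, Nat.fib_add_two (n := m + 2), add_comm]

lemma map_valEmbedding_mem_sparseSubsets_iff {m : ℕ} {A : Finset (Fin m)} :
    A.map Fin.valEmbedding ∈ sparseSubsets m ↔ ∀ i ∈ A, ∀ j ∈ A, (i : ℕ) + 1 ≠ j := by
  simp [mem_sparseSubsets, subset_iff, eq_comm (b := _ + 1)]

lemma card_subtype_map_valEmbedding_mem {m : ℕ} {s : Finset (Finset ℕ)}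
    (hs : ∀ B ∈ s, B ⊆ range m) :
    Nat.card {A : Finset (Fin m) // A.map Fin.valEmbedding ∈ s} = #s := by
  rw [← Nat.card_eq_finsetCard]
  refine Nat.card_congr (Equiv.ofBijective (fun A => ⟨A.1.map Fin.valEmbedding, A.2⟩) ⟨?_, ?_⟩)
  · intro A B h
    exact Subtype.ext (map_injective _ (congrArg Subtype.val h))
  · rintro ⟨B, hB⟩
    have : B ⊆ (univ : Finset (Fin m)).map Fin.valEmbedding := by
      rw [Fin.map_valEmbedding_univ, Nat.Iio_eq_range]; exact hs B hB
    obtain ⟨A, -, rfl⟩ := subset_map_iff.1 this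
    exact ⟨⟨A, hB⟩, rfl⟩

section triChain

variable {n : ℕ}

open Sum

lemma triChain_adj_inl_inl {i j : Fin (n + 1)} :
    (triChain n).Adj (inl i) (inl j) ↔ (i : ℕ) + 1 = j ∨ (j : ℕ) + 1 = i := by
  simp only [triChain, SimpleGraph.fromRel_adj, ne_eq, inl.injEq]
  omega

lemma triChain_adj_inr {k : Fin n} {v : Fin (n + 1) ⊕ Fin n} :
    (triChain n).Adj (inr k) v ↔ v = inl k.castSucc ∨ v = inl k.succ := by
  rcases v with i | l <;> simp [triChain, Fin.ext_iff, eq_comm]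

def triangle (k : Fin n) : Finset (Fin (n + 1) ⊕ Fin n) := {inl k.castSucc, inl k.succ, inr k}

lemma isClique_triangle (k : Fin n) : (triChain n).IsClique (triangle k : Set _) := by
  simp [triangle, SimpleGraph.isClique_insert, triChain_adj_inl_inl,
    SimpleGraph.adj_comm _ _ (inr k), triChain_adj_inr]

lemma exists_mem_triangle (hn : 0 < n) (v : Fin (n + 1) ⊕ Fin n) : ∃ k, v ∈ triangle k := by
  obtain ⟨m, rfl⟩ := Nat.exists_eq_add_of_lt hn
  rcases v with i | k
  · rcases Fin.eq_castSucc_or_eq_last i with ⟨k, rfl⟩ | rfl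
    · exact ⟨k, by simp [triangle]⟩
    · exact ⟨Fin.last _, by simp [triangle]⟩
  · exact ⟨k, by simp [triangle]⟩

def freeApexes (A : Finset (Fin (n + 1))) : Finset (Fin n) :=
  {k | k.castSucc ∉ A ∧ k.succ ∉ A}

theorem isIndepDomSet_triChain_iff (hn : 0 < n) {S : Finset (Fin (n + 1) ⊕ Fin n)} :
    IsIndepDomSet (triChain n) S ↔
      S.toLeft.map Fin.valEmbedding ∈ sparseSubsets (n + 1) ∧ S.toRight = freeApexes S.toLeft := by
  simp only [map_valEmbedding_mem_sparseSubsets_iff, Finset.ext_iff, freeApexes, mem_toRight,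
    mem_toLeft, mem_filter, mem_univ, true_and]
  constructor
  · rintro ⟨hind, hdom⟩
    refine ⟨fun i hi j hj hij => hind _ hi _ hj (triChain_adj_inl_inl.2 (.inl hij)), fun k => ?_⟩
    constructor
    · intro hk
      exact ⟨fun h => hind _ hk _ h (triChain_adj_inr.2 (.inl rfl)),
        fun h => hind _ hk _ h (triChain_adj_inr.2 (.inr rfl))⟩
    · rintro ⟨h₁, h₂⟩
      by_contra hk
      obtain ⟨w, hw, hadj⟩ := hdom _ hk
      rcases triChain_adj_inr.1 hadj with rfl | rfl <;> contradiction
  · rintro ⟨hsparse, hapex⟩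
    refine ⟨?_, fun v hv => ?_⟩
    · have apex_not_adj : ∀ k w, inr k ∈ S → w ∈ S → ¬ (triChain n).Adj (inr k) w := by
        intro k w hk hw hadj
        rcases triChain_adj_inr.1 hadj with rfl | rfl
        exacts [((hapex k).1 hk).1 hw, ((hapex k).1 hk).2 hw]
      rintro (i | k) hv w hw hadj
      · rcases w with j | l
        · rcases triChain_adj_inl_inl.1 hadj with h | h
          exacts [hsparse i hv j hw h, hsparse j hw i hv h]
        · exact apex_not_adj l _ hw hv hadj.symm
      · exact apex_not_adj k w hv hw hadj
    · obtain ⟨k, hk⟩ := exists_mem_triangle hn v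
      obtain ⟨w, hwk, hwS⟩ : ∃ w ∈ triangle k, w ∈ S := by
        by_contra! h
        simp only [triangle, mem_insert, mem_singleton, forall_eq_or_imp, forall_eq] at h
        exact h.2.2 ((hapex k).2 ⟨h.1, h.2.1⟩)
      exact ⟨w, hwS, isClique_triangle k hk hwk (ne_of_mem_of_not_mem hwS hv).symm⟩

def triChainIndepDomSetEquiv (hn : 0 < n) :
    {S // IsIndepDomSet (triChain n) S} ≃
      {A : Finset (Fin (n + 1)) // A.map Fin.valEmbedding ∈ sparseSubsets (n + 1)} where
  toFun S := ⟨S.1.toLeft, ((isIndepDomSet_triChain_iff hn).1 S.2).1⟩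
  invFun A := ⟨A.1.disjSum (freeApexes A.1),
    (isIndepDomSet_triChain_iff hn).2 ⟨by simpa using A.2, by simp⟩⟩
  left_inv S := Subtype.ext <| by
    simp only [← ((isIndepDomSet_triChain_iff hn).1 S.2).2, toLeft_disjSum_toRight]
  right_inv A := Subtype.ext (toLeft_disjSum ..)

end triChain

/-- For every `n ≥ 1`, the number of independent dominating sets of the chain
triangular cactus `T n` equals the Fibonacci number `F (n+3)`. -/
theorem numIDSTri_eq_fib (n : ℕ) (hn : 1 ≤ n) :
    numIDSTri n = Nat.fib (n + 3) := by
  rw [numIDSTri, Nat.card_congr (triChainIndepDomSetEquiv hn),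
    card_subtype_map_valEmbedding_mem fun B hB => (mem_sparseSubsets.1 hB).1, card_sparseSubsets]
end

section
/- Let t_n denote the number of independent dominating sets of the chain triangular cactus T_n. For every n ≥ 1, the number of independent dominating sets of T_{n+1} that do not contain the end cut vertex x_{n+1} equals t_n. -/
/-!
Restriction to `T n` is a bijection. An independent dominating set `S` of `T (n+1)` avoiding
`x (n+1)` dominates `x (n+1)` through exactly one of the adjacent vertices `x n`, `y (n+1)`, so
`S` is determined by its restriction to `T n`. That restriction is still dominating: only `x n`
can lose its dominator (`y (n+1)`), but for `n ≥ 1` it has the same closed neighbourhood in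
`T n` as `y n`, whose neighbours all lie in `T n`.
-/

open Sum

lemma pairwise_not_adj_preimage {V W : Type*} {G : SimpleGraph V} {G' : SimpleGraph W}
    (f : G ↪g G') {S : Finset W} (hS : ∀ v ∈ S, ∀ w ∈ S, ¬ G'.Adj v w) :
    ∀ v ∈ S.preimage f f.injective.injOn, ∀ w ∈ S.preimage f f.injective.injOn,
      ¬ G.Adj v w := by
  intro v hv w hw hvw
  exact hS _ (Finset.mem_preimage.1 hv) _ (Finset.mem_preimage.1 hw) (f.map_adj_iff.2 hvw)

namespace triChain

variable {n : ℕ}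

@[simp]
lemma adj_inl_inl {i j : Fin (n + 1)} :
    (triChain n).Adj (inl i) (inl j) ↔ (i : ℕ) + 1 = j ∨ (j : ℕ) + 1 = i := by
  simp only [triChain, SimpleGraph.fromRel_adj, ne_eq, inl.injEq, and_iff_right_iff_imp]
  rintro h rfl
  omega

@[simp]
lemma adj_inl_inr {i : Fin (n + 1)} {k : Fin n} :
    (triChain n).Adj (inl i) (inr k) ↔ (i : ℕ) = k ∨ (i : ℕ) = k + 1 := by
  simp [triChain]

@[simp]
lemma adj_inr_inl {i : Fin (n + 1)} {k : Fin n} :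
    (triChain n).Adj (inr k) (inl i) ↔ (i : ℕ) = k ∨ (i : ℕ) = k + 1 := by
  rw [SimpleGraph.adj_comm, adj_inl_inr]

@[simp]
lemma not_adj_inr_inr {k l : Fin n} : ¬ (triChain n).Adj (inr k) (inr l) := by
  simp [triChain]

lemma adj_inl_last_iff {p : Fin (n + 2) ⊕ Fin (n + 1)} :
    (triChain (n + 1)).Adj (inl (Fin.last (n + 1))) p ↔
      p = inl (Fin.last n).castSucc ∨ p = inr (Fin.last n) := by
  rcases p with i | k <;> simp [Fin.ext_iff] <;> omega

lemma adj_inr_last_iff {p : Fin (n + 2) ⊕ Fin (n + 1)} :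
    (triChain (n + 1)).Adj (inr (Fin.last n)) p ↔
      p = inl (Fin.last n).castSucc ∨ p = inl (Fin.last (n + 1)) := by
  rcases p with i | k <;> simp [Fin.ext_iff]

def castSuccEmb (n : ℕ) : triChain n ↪g triChain (n + 1) where
  toFun := Sum.map Fin.castSucc Fin.castSucc
  inj' := Sum.map_injective.2 ⟨Fin.castSucc_injective _, Fin.castSucc_injective _⟩
  map_rel_iff' := by rintro (i | k) (j | l) <;> simp

@[simp]
lemma castSuccEmb_inl (i : Fin (n + 1)) : castSuccEmb n (inl i) = inl i.castSucc := rfl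

@[simp]
lemma castSuccEmb_inr (k : Fin n) : castSuccEmb n (inr k) = inr k.castSucc := rfl

lemma castSuccEmb_ne_inl_last (v : Fin (n + 1) ⊕ Fin n) :
    castSuccEmb n v ≠ inl (Fin.last (n + 1)) := by
  rcases v with i | k <;> simp [Fin.castSucc_ne_last]

lemma castSuccEmb_ne_inr_last (v : Fin (n + 1) ⊕ Fin n) :
    castSuccEmb n v ≠ inr (Fin.last n) := by
  rcases v with i | k <;> simp [Fin.castSucc_ne_last]

lemma exists_castSuccEmb_eq_or (p : Fin (n + 2) ⊕ Fin (n + 1)) :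
    (∃ v, castSuccEmb n v = p) ∨ p = inl (Fin.last (n + 1)) ∨ p = inr (Fin.last n) := by
  rcases p with i | k
  · rcases Fin.eq_castSucc_or_eq_last i with ⟨j, rfl⟩ | rfl
    · exact Or.inl ⟨inl j, rfl⟩
    · exact Or.inr (Or.inl rfl)
  · rcases Fin.eq_castSucc_or_eq_last k with ⟨l, rfl⟩ | rfl
    · exact Or.inl ⟨inr l, rfl⟩
    · exact Or.inr (Or.inr rfl)

noncomputable def restrict (S : Finset (Fin (n + 2) ⊕ Fin (n + 1))) :
    Finset (Fin (n + 1) ⊕ Fin n) :=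
  S.preimage (castSuccEmb n) (castSuccEmb n).injective.injOn

@[simp]
lemma mem_restrict {S : Finset (Fin (n + 2) ⊕ Fin (n + 1))} {v : Fin (n + 1) ⊕ Fin n} :
    v ∈ restrict S ↔ castSuccEmb n v ∈ S :=
  Finset.mem_preimage

def extend (S : Finset (Fin (n + 1) ⊕ Fin n)) : Finset (Fin (n + 2) ⊕ Fin (n + 1)) :=
  if inl (Fin.last n) ∈ S then S.map (castSuccEmb n).toEmbedding
  else insert (inr (Fin.last n)) (S.map (castSuccEmb n).toEmbedding)

@[simp]
lemma castSuccEmb_mem_extend {S : Finset (Fin (n + 1) ⊕ Fin n)} {v : Fin (n + 1) ⊕ Fin n} :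
    castSuccEmb n v ∈ extend S ↔ v ∈ S := by
  unfold extend
  split_ifs <;> simp [castSuccEmb_ne_inr_last]

lemma inl_last_not_mem_extend (S : Finset (Fin (n + 1) ⊕ Fin n)) :
    inl (Fin.last (n + 1)) ∉ extend S := by
  unfold extend
  split_ifs <;> simp

lemma inr_last_mem_extend {S : Finset (Fin (n + 1) ⊕ Fin n)} :
    inr (Fin.last n) ∈ extend S ↔ inl (Fin.last n) ∉ S := by
  unfold extend
  split_ifs <;> simp_all

lemma restrict_extend (S : Finset (Fin (n + 1) ⊕ Fin n)) : restrict (extend S) = S := by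
  ext v
  simp

section IndepDomSet

variable {S : Finset (Fin (n + 2) ⊕ Fin (n + 1))}
  (hS : IsIndepDomSet (triChain (n + 1)) S) (hx : inl (Fin.last (n + 1)) ∉ S)
include hS hx

lemma inr_last_mem_iff :
    inr (Fin.last n) ∈ S ↔ inl (Fin.last n).castSucc ∉ S := by
  refine ⟨fun hy hxn => hS.1 _ hxn _ hy (by simp), fun hxn => ?_⟩
  obtain ⟨w, hw, hadj⟩ := hS.2 _ hx
  rcases adj_inl_last_iff.1 hadj with rfl | rfl
  · exact absurd hw hxn
  · exact hw

lemma isIndepDomSet_restrict (hn : 1 ≤ n) : IsIndepDomSet (triChain n) (restrict S) := by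
  refine ⟨pairwise_not_adj_preimage _ hS.1, fun v hv => ?_⟩
  have dominated : ∀ v ∉ restrict S, v ≠ inl (Fin.last n) →
      ∃ w ∈ restrict S, (triChain n).Adj v w := by
    intro v hv hvx
    obtain ⟨w, hw, hadj⟩ := hS.2 _ (mt mem_restrict.2 hv)
    rcases exists_castSuccEmb_eq_or w with ⟨u, rfl⟩ | rfl | rfl
    · exact ⟨u, mem_restrict.2 hw, (castSuccEmb n).map_adj_iff.1 hadj⟩
    · exact absurd hw hx
    · rcases adj_inr_last_iff.1 hadj.symm with h | h
      · exact absurd ((castSuccEmb n).injective (h.trans rfl)) hvx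
      · exact absurd h (castSuccEmb_ne_inl_last v)
  by_cases hvx : v = inl (Fin.last n)
  · subst hvx
    obtain ⟨m, rfl⟩ : ∃ m, n = m + 1 := ⟨n - 1, by omega⟩
    -- `x n` and `y n` are closed twins in `T n`, and `y n` is still dominated.
    by_cases hy : inr (Fin.last m) ∈ restrict S
    · exact ⟨_, hy, adj_inl_last_iff.2 (Or.inr rfl)⟩
    obtain ⟨w, hw, hadj⟩ := dominated _ hy (by simp)
    rcases adj_inr_last_iff.1 hadj with rfl | rfl
    · exact ⟨_, hw, adj_inl_last_iff.2 (Or.inl rfl)⟩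
    · exact absurd hw hv
  · exact dominated v hv hvx

end IndepDomSet

lemma isIndepDomSet_of_restrict {S : Finset (Fin (n + 2) ⊕ Fin (n + 1))}
    (hR : IsIndepDomSet (triChain n) (restrict S)) (hx : inl (Fin.last (n + 1)) ∉ S)
    (hy : inr (Fin.last n) ∈ S ↔ inl (Fin.last n).castSucc ∉ S) :
    IsIndepDomSet (triChain (n + 1)) S := by
  have hy_indep :
      inr (Fin.last n) ∈ S → ∀ w ∈ S, ¬ (triChain (n + 1)).Adj (inr (Fin.last n)) w := by
    intro hyS w hw hadj
    rcases adj_inr_last_iff.1 hadj with rfl | rfl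
    · exact hy.1 hyS hw
    · exact hx hw
  constructor
  · intro v hv w hw hadj
    rcases exists_castSuccEmb_eq_or v with ⟨v, rfl⟩ | rfl | rfl
    · rcases exists_castSuccEmb_eq_or w with ⟨w, rfl⟩ | rfl | rfl
      · exact hR.1 v (mem_restrict.2 hv) w (mem_restrict.2 hw)
          ((castSuccEmb n).map_adj_iff.1 hadj)
      · exact hx hw
      · exact hy_indep hw _ hv hadj.symm
    · exact hx hv
    · exact hy_indep hv w hw hadj
  · intro v hv
    rcases exists_castSuccEmb_eq_or v with ⟨v, rfl⟩ | rfl | rfl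
    · obtain ⟨w, hw, hadj⟩ := hR.2 v (mt mem_restrict.1 hv)
      exact ⟨_, mem_restrict.1 hw, (castSuccEmb n).map_adj_iff.2 hadj⟩
    · by_cases hyS : inr (Fin.last n) ∈ S
      · exact ⟨_, hyS, adj_inl_last_iff.2 (Or.inr rfl)⟩
      · exact ⟨_, not_not.1 (mt hy.2 hyS), adj_inl_last_iff.2 (Or.inl rfl)⟩
    · exact ⟨_, not_not.1 (mt hy.2 hv), adj_inr_last_iff.2 (Or.inl rfl)⟩

lemma isIndepDomSet_extend {S : Finset (Fin (n + 1) ⊕ Fin n)}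
    (hS : IsIndepDomSet (triChain n) S) : IsIndepDomSet (triChain (n + 1)) (extend S) := by
  refine isIndepDomSet_of_restrict ((restrict_extend S).symm ▸ hS)
    (inl_last_not_mem_extend S) ?_
  rw [inr_last_mem_extend, ← castSuccEmb_inl, castSuccEmb_mem_extend]

lemma extend_restrict {S : Finset (Fin (n + 2) ⊕ Fin (n + 1))}
    (hS : IsIndepDomSet (triChain (n + 1)) S) (hx : inl (Fin.last (n + 1)) ∉ S) :
    extend (restrict S) = S := by
  ext p
  rcases exists_castSuccEmb_eq_or p with ⟨v, rfl⟩ | rfl | rfl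
  · rw [castSuccEmb_mem_extend, mem_restrict]
  · exact iff_of_false (inl_last_not_mem_extend _) hx
  · rw [inr_last_mem_extend, inr_last_mem_iff hS hx, mem_restrict, castSuccEmb_inl]

noncomputable def restrictEquiv (hn : 1 ≤ n) :
    {S : Finset (Fin (n + 2) ⊕ Fin (n + 1)) //
        IsIndepDomSet (triChain (n + 1)) S ∧ inl (Fin.last (n + 1)) ∉ S} ≃
      {S : Finset (Fin (n + 1) ⊕ Fin n) // IsIndepDomSet (triChain n) S} where
  toFun S := ⟨restrict S.1, isIndepDomSet_restrict S.2.1 S.2.2 hn⟩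
  invFun S := ⟨extend S.1, isIndepDomSet_extend S.2, inl_last_not_mem_extend S.1⟩
  left_inv S := Subtype.ext (extend_restrict S.2.1 S.2.2)
  right_inv S := Subtype.ext (restrict_extend S.1)

end triChain

/-- For every `n ≥ 1`, the number of independent dominating sets of `T (n+1)` that
do not contain the end cut vertex `x (n+1)` equals `t n`. -/
theorem numIDSTri_not_containing_end (n : ℕ) (hn : 1 ≤ n) :
    Nat.card {S : Finset (Fin (n + 2) ⊕ Fin (n + 1)) //
        IsIndepDomSet (triChain (n + 1)) S ∧ Sum.inl (Fin.last (n + 1)) ∉ S} =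
      numIDSTri n :=
  Nat.card_congr (triChain.restrictEquiv hn)
end

section
/- Let m_n denote the number of independent dominating sets of the meta-chain hexagonal cactus M_n for n ≥ 1, and set m_0 = 1 (the one-vertex graph M_0 has exactly one maximal independent set). Then, in the ring of formal power series over ℚ, (1 - 3X - X² - 2X³) · (∑_{n≥0} m_n Xⁿ) = 1 + 2X + 3X². -/
/-- The meta-chain hexagonal cactus `M n`: `Sum.inl i` is the cut vertex `x i`
(`0 ≤ i ≤ n`) and `Sum.inr (k, t)` for `t = 0, 1, 2, 3` is `a (k+1)`, `b (k+1)`,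
`c (k+1)`, `d (k+1)` respectively (`0 ≤ k ≤ n-1`); the `i`-th hexagon
(`1 ≤ i ≤ n`) is the six-cycle `x (i-1) – a i – x i – b i – c i – d i – x (i-1)`. -/
def metaHex (n : ℕ) : SimpleGraph (Fin (n + 1) ⊕ Fin n × Fin 4) :=
  SimpleGraph.fromRel fun p q =>
    match p, q with
    | Sum.inl i, Sum.inr (k, t) =>
        ((i : ℕ) = (k : ℕ) ∧ (t = 0 ∨ t = 3)) ∨
          ((i : ℕ) = (k : ℕ) + 1 ∧ (t = 0 ∨ t = 1))
    | Sum.inr (k, t), Sum.inr (k', t') =>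
        k = k' ∧ ((t = 1 ∧ t' = 2) ∨ (t = 2 ∧ t' = 3))
    | _, _ => False

/-- The number of independent dominating sets of the meta-chain hexagonal cactus `M n`. -/
noncomputable def numIDSMetaHex (n : ℕ) : ℕ :=
  Nat.card {S : Finset (Fin (n + 1) ⊕ Fin n × Fin 4) // IsIndepDomSet (metaHex n) S}

open Finset

namespace SimpleGraph

variable {V V' W : Type*}

def IsIndepDomSetExcept (G : SimpleGraph V) (x : V) (S : Finset V) : Prop :=
  (∀ v ∈ S, ∀ w ∈ S, ¬ G.Adj v w) ∧ ∀ v ∉ S, v ≠ x → ∃ w ∈ S, G.Adj v w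

instance [Fintype V] [DecidableEq V] (G : SimpleGraph V) [DecidableRel G.Adj] (x : V) :
    DecidablePred (G.IsIndepDomSetExcept x) :=
  fun _ => inferInstanceAs (Decidable (_ ∧ _))

def cutState [DecidableEq V] (G : SimpleGraph V) [DecidableRel G.Adj] (x : V) (S : Finset V) :
    Fin 3 :=
  if x ∈ S then 0 else if ∃ w ∈ S, G.Adj x w then 1 else 2

def stateCount [Fintype V] [DecidableEq V] (G : SimpleGraph V) [DecidableRel G.Adj] (x : V)
    (s : Fin 3) : ℕ :=
  #{S | G.IsIndepDomSetExcept x S ∧ G.cutState x S = s}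

section cutState

variable [DecidableEq V] {G : SimpleGraph V} [DecidableRel G.Adj] {x : V} {S : Finset V}

theorem cutState_eq_zero : G.cutState x S = 0 ↔ x ∈ S := by
  unfold cutState; split_ifs <;> simp_all

theorem cutState_eq_one : G.cutState x S = 1 ↔ x ∉ S ∧ ∃ w ∈ S, G.Adj x w := by
  unfold cutState; split_ifs <;> simp_all

theorem cutState_eq_two : G.cutState x S = 2 ↔ x ∉ S ∧ ¬ ∃ w ∈ S, G.Adj x w := by
  unfold cutState; split_ifs <;> simp_all

theorem isIndepDomSet_iff_cutState :
    IsIndepDomSet G S ↔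
      G.IsIndepDomSetExcept x S ∧ (G.cutState x S = 0 ∨ G.cutState x S = 1) := by
  rw [cutState_eq_zero, cutState_eq_one, IsIndepDomSet, IsIndepDomSetExcept]
  constructor
  · rintro ⟨hind, hdom⟩
    exact ⟨⟨hind, fun v hv _ => hdom v hv⟩, or_iff_not_imp_left.2 fun hx => ⟨hx, hdom x hx⟩⟩
  · rintro ⟨⟨hind, hdom⟩, hx⟩
    refine ⟨hind, fun v hv => ?_⟩
    obtain rfl | hvx := eq_or_ne v x
    exacts [hx.resolve_left hv |>.2, hdom v hv hvx]

end cutState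

theorem card_isIndepDomSet_eq_stateCount_add [Fintype V] [DecidableEq V] (G : SimpleGraph V)
    [DecidableRel G.Adj] (x : V) :
    Nat.card {S : Finset V // IsIndepDomSet G S} = G.stateCount x 0 + G.stateCount x 1 := by
  classical
  rw [Nat.card_eq_fintype_card, Fintype.card_subtype, stateCount, stateCount,
    ← card_union_of_disjoint (disjoint_filter.2 fun S _ h0 h1 => by simp [h0.2] at h1),
    ← filter_or]
  simp only [isIndepDomSet_iff_cutState (x := x), and_or_left]

section iso

variable {G : SimpleGraph V} {G' : SimpleGraph V'} (e : G ≃g G') {x : V} {S : Finset V}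

theorem IsIndepDomSetExcept.map (h : G.IsIndepDomSetExcept x S) :
    G'.IsIndepDomSetExcept (e x) (S.map e.toEquiv.toEmbedding) := by
  refine ⟨?_, fun v hv hvx => ?_⟩
  · simp only [forall_mem_map, Equiv.coe_toEmbedding, RelIso.coe_fn_toEquiv, e.map_adj_iff]
    exact h.1
  · obtain ⟨a, rfl⟩ := e.surjective v
    obtain ⟨b, hb, hab⟩ := h.2 a (fun ha => hv (mem_map_of_mem _ ha)) (fun hax => hvx (hax ▸ rfl))
    exact ⟨e b, mem_map_of_mem _ hb, e.map_adj_iff.2 hab⟩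

theorem Iso.isIndepDomSetExcept_map :
    G'.IsIndepDomSetExcept (e x) (S.map e.toEquiv.toEmbedding) ↔ G.IsIndepDomSetExcept x S := by
  refine ⟨fun h => ?_, (·.map e)⟩
  convert h.map e.symm
  · exact (e.symm_apply_apply x).symm
  · exact (e.toEquiv.finsetCongr.symm_apply_apply S).symm

theorem Iso.cutState_map [DecidableEq V] [DecidableRel G.Adj] [DecidableEq V']
    [DecidableRel G'.Adj] :
    G'.cutState (e x) (S.map e.toEquiv.toEmbedding) = G.cutState x S := by
  have hmem (v : V) : e v ∈ S.map e.toEquiv.toEmbedding ↔ v ∈ S := mem_map' _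
  have hdom : (∃ w ∈ S.map e.toEquiv.toEmbedding, G'.Adj (e x) w) ↔ ∃ w ∈ S, G.Adj x w := by
    rw [← e.toEquiv.exists_congr_right]
    simp only [RelIso.coe_fn_toEquiv, hmem, e.map_adj_iff]
  simp only [cutState, hmem, hdom]

theorem Iso.stateCount_eq [Fintype V] [DecidableEq V] [Fintype V'] [DecidableEq V']
    [DecidableRel G.Adj] [DecidableRel G'.Adj] (s : Fin 3) :
    G'.stateCount (e x) s = G.stateCount x s := by
  refine (card_equiv e.toEquiv.finsetCongr fun S => ?_).symm
  simp [Equiv.finsetCongr_apply, e.isIndepDomSetExcept_map, e.cutState_map]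

end iso

def hang (G : SimpleGraph V) (x : V) (H : SimpleGraph W) (N : Finset W) :
    SimpleGraph (V ⊕ W) where
  Adj
    | .inl a, .inl b => G.Adj a b
    | .inr a, .inr b => H.Adj a b
    | .inl a, .inr w => a = x ∧ w ∈ N
    | .inr w, .inl a => a = x ∧ w ∈ N
  symm.symm := by rintro (a | a) (b | b) h <;> simp_all [adj_comm]
  loopless.irrefl := by rintro (a | a) h <;> simp_all

section hang

variable {G : SimpleGraph V} {x : V} {H : SimpleGraph W} {N : Finset W}

@[simp] theorem hang_adj_inl_inl {a b : V} : (G.hang x H N).Adj (.inl a) (.inl b) ↔ G.Adj a b :=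
  .rfl
@[simp] theorem hang_adj_inr_inr {a b : W} : (G.hang x H N).Adj (.inr a) (.inr b) ↔ H.Adj a b :=
  .rfl
@[simp] theorem hang_adj_inl_inr {a : V} {w : W} :
    (G.hang x H N).Adj (.inl a) (.inr w) ↔ a = x ∧ w ∈ N := .rfl
@[simp] theorem hang_adj_inr_inl {a : V} {w : W} :
    (G.hang x H N).Adj (.inr w) (.inl a) ↔ a = x ∧ w ∈ N := .rfl

instance [DecidableEq V] [DecidableRel G.Adj] [DecidableEq W] [DecidableRel H.Adj] :
    DecidableRel (G.hang x H N).Adj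
  | .inl _, .inl _ => inferInstanceAs (Decidable (G.Adj _ _))
  | .inr _, .inr _ => inferInstanceAs (Decidable (H.Adj _ _))
  | .inl _, .inr _ => inferInstanceAs (Decidable (_ ∧ _))
  | .inr _, .inl _ => inferInstanceAs (Decidable (_ ∧ _))

end hang

def HangAdmissible (H : SimpleGraph W) (N : Finset W) (y : W) (s : Fin 3) (T : Finset W) : Prop :=
  (∀ v ∈ T, ∀ w ∈ T, ¬ H.Adj v w) ∧ (s = 0 → Disjoint T N) ∧ (s = 2 → ¬ Disjoint T N) ∧
    ∀ w ∉ T, w ≠ y → (∃ t ∈ T, H.Adj w t) ∨ (s = 0 ∧ w ∈ N)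

instance [Fintype W] [DecidableEq W] (H : SimpleGraph W) [DecidableRel H.Adj] (N : Finset W)
    (y : W) (s : Fin 3) : DecidablePred (HangAdmissible H N y s) :=
  fun _ => inferInstanceAs (Decidable (_ ∧ _))

def hangState [DecidableEq W] (H : SimpleGraph W) [DecidableRel H.Adj] (N : Finset W) (y : W)
    (s : Fin 3) (T : Finset W) : Fin 3 :=
  if y ∈ T then 0 else if (s = 0 ∧ y ∈ N) ∨ ∃ t ∈ T, H.Adj y t then 1 else 2

def hangCount [Fintype W] [DecidableEq W] (H : SimpleGraph W) [DecidableRel H.Adj]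
    (N : Finset W) (y : W) (s s' : Fin 3) : ℕ :=
  #{T | HangAdmissible H N y s T ∧ hangState H N y s T = s'}

section transfer

variable [DecidableEq V] {G : SimpleGraph V} [DecidableRel G.Adj] {x : V}
  {H : SimpleGraph W} {N : Finset W} {y : W}

theorem cutState_hang_disjSum [DecidableEq W] [DecidableRel H.Adj] (S : Finset V) (T : Finset W) :
    (G.hang x H N).cutState (.inr y) (S.disjSum T) = hangState H N y (G.cutState x S) T := by
  simp only [cutState, hangState, inr_mem_disjSum, Sum.exists, inl_mem_disjSum, hang_adj_inr_inl,
    hang_adj_inr_inr]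
  by_cases hy : y ∈ T
  · simp [hy]
  by_cases hx : x ∈ S
  · simp [hx, hy]
  by_cases hd : ∃ w ∈ S, G.Adj x w <;> simp [hx, hy, hd]

theorem isIndepDomSetExcept_hang_disjSum (S : Finset V) (T : Finset W) :
    (G.hang x H N).IsIndepDomSetExcept (.inr y) (S.disjSum T) ↔
      G.IsIndepDomSetExcept x S ∧ HangAdmissible H N y (G.cutState x S) T := by
  simp only [IsIndepDomSetExcept, HangAdmissible, Sum.forall, Sum.exists, inl_mem_disjSum,
    inr_mem_disjSum, hang_adj_inl_inl, hang_adj_inl_inr, hang_adj_inr_inl, hang_adj_inr_inr, ne_eq,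
    Sum.inr.injEq, reduceCtorEq]
  by_cases hx : x ∈ S
  · rw [cutState_eq_zero.2 hx]
    simp only [Finset.disjoint_left]
    grind
  by_cases hd : ∃ w ∈ S, G.Adj x w
  · rw [cutState_eq_one.2 ⟨hx, hd⟩]
    grind
  · rw [cutState_eq_two.2 ⟨hx, hd⟩]
    simp only [Finset.disjoint_left]
    grind

theorem stateCount_hang [Fintype V] [Fintype W] [DecidableEq W] [DecidableRel H.Adj] (s' : Fin 3) :
    (G.hang x H N).stateCount (.inr y) s' = ∑ s, G.stateCount x s * hangCount H N y s s' := by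
  have hsplit : (G.hang x H N).stateCount (.inr y) s' =
      #{p : Finset V × Finset W | G.IsIndepDomSetExcept x p.1 ∧
        HangAdmissible H N y (G.cutState x p.1) p.2 ∧
          hangState H N y (G.cutState x p.1) p.2 = s'} := by
    refine card_equiv sumEquiv.toEquiv fun S' => ?_
    obtain ⟨S, T, rfl⟩ : ∃ (S : Finset V) (T : Finset W), S' = S.disjSum T :=
      ⟨_, _, toLeft_disjSum_toRight.symm⟩
    simp [isIndepDomSetExcept_hang_disjSum, cutState_hang_disjSum, and_assoc]
  rw [hsplit, card_eq_sum_card_fiberwise (f := fun p => G.cutState x p.1) (t := univ) (by simp)]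
  refine sum_congr rfl fun s _ => ?_
  rw [stateCount, hangCount, ← card_product]
  congr 1
  ext ⟨S, T⟩
  simp only [mem_filter, mem_univ, true_and, mem_product]
  grind

end transfer

instance (n : ℕ) : DecidableRel (pathGraph n).Adj := fun _ _ => decidable_of_iff' _ pathGraph_adj

theorem hangCount_pathGraph_five :
    hangCount (pathGraph 5) {0, 4} 1 = ![![1, 1, 1], ![2, 2, 0], ![1, 2, 0]] := by
  decide

end SimpleGraph

namespace MetaHex

open SimpleGraph

section adj

variable {n : ℕ}

@[simp] theorem adj_inl_inl (i j : Fin (n + 1)) : ¬ (metaHex n).Adj (.inl i) (.inl j) := by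
  simp [metaHex]

@[simp] theorem adj_inl_inr (i : Fin (n + 1)) (k : Fin n) (t : Fin 4) :
    (metaHex n).Adj (.inl i) (.inr (k, t)) ↔
      ((i : ℕ) = k ∧ (t = 0 ∨ t = 3)) ∨ ((i : ℕ) = k + 1 ∧ (t = 0 ∨ t = 1)) := by
  simp [metaHex]

@[simp] theorem adj_inr_inl (i : Fin (n + 1)) (k : Fin n) (t : Fin 4) :
    (metaHex n).Adj (.inr (k, t)) (.inl i) ↔
      ((i : ℕ) = k ∧ (t = 0 ∨ t = 3)) ∨ ((i : ℕ) = k + 1 ∧ (t = 0 ∨ t = 1)) := by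
  rw [adj_comm, adj_inl_inr]

@[simp] theorem adj_inr_inr (k k' : Fin n) (t t' : Fin 4) :
    (metaHex n).Adj (.inr (k, t)) (.inr (k', t')) ↔
      k = k' ∧ ((t = 1 ∧ t' = 2) ∨ (t = 2 ∧ t' = 3) ∨ (t = 2 ∧ t' = 1) ∨ (t = 3 ∧ t' = 2)) := by
  simp only [metaHex, fromRel_adj, ne_eq, Sum.inr.injEq, Prod.mk.injEq, not_and]
  grind

instance : DecidableRel (metaHex n).Adj
  | .inl _, .inl _ => .isFalse (adj_inl_inl _ _)
  | .inl _, .inr (_, _) => decidable_of_iff' _ (adj_inl_inr _ _ _)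
  | .inr (_, _), .inl _ => decidable_of_iff' _ (adj_inr_inl _ _ _)
  | .inr (_, _), .inr (_, _) => decidable_of_iff' _ (adj_inr_inr _ _ _ _)

end adj

def lastCut (n : ℕ) : Fin (n + 1) ⊕ Fin n × Fin 4 := .inl (Fin.last n)

theorem stateCount_zero : (metaHex 0).stateCount (lastCut 0) = ![1, 0, 1] := by
  decide

/-- The vertices `0, …, 4` of `pathGraph 5` become `a (n+1), x (n+1), b (n+1), c (n+1), d (n+1)`. -/
def succVertex (n : ℕ) :
    (Fin (n + 1) ⊕ Fin n × Fin 4) ⊕ Fin 5 → Fin (n + 2) ⊕ Fin (n + 1) × Fin 4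
  | .inl (.inl i) => .inl i.castSucc
  | .inl (.inr (k, t)) => .inr (k.castSucc, t)
  | .inr j => ![.inr (Fin.last n, 0), .inl (Fin.last (n + 1)), .inr (Fin.last n, 1),
      .inr (Fin.last n, 2), .inr (Fin.last n, 3)] j

theorem succVertex_bijective (n : ℕ) : Function.Bijective (succVertex n) := by
  refine (Fintype.bijective_iff_injective_and_card _).2
    ⟨?_, by simp only [Fintype.card_sum, Fintype.card_fin, Fintype.card_prod]; ring⟩
  rintro ((i | ⟨k, t⟩) | j) ((i' | ⟨k', t'⟩) | j') h <;>
    (try fin_cases j) <;> (try fin_cases j') <;>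
    simp_all [succVertex, (Fin.castSucc_ne_last _).symm]

noncomputable def succIso (n : ℕ) :
    (metaHex n).hang (lastCut n) (pathGraph 5) {0, 4} ≃g metaHex (n + 1) where
  toEquiv := .ofBijective _ (succVertex_bijective n)
  map_rel_iff' := by
    rintro ((i | ⟨k, t⟩) | j) ((i' | ⟨k', t'⟩) | j') <;>
      (try fin_cases j) <;> (try fin_cases j') <;>
      simp [succVertex, lastCut, pathGraph_adj, (Fin.castSucc_ne_last _).symm] <;>
      (try simp only [Fin.ext_iff (n := n + 1), Fin.val_last]) <;> omega

theorem stateCount_succ (n : ℕ) (s' : Fin 3) :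
    (metaHex (n + 1)).stateCount (lastCut (n + 1)) s' =
      ∑ s, (metaHex n).stateCount (lastCut n) s * ![![1, 1, 1], ![2, 2, 0], ![1, 2, 0]] s s' := by
  rw [← hangCount_pathGraph_five, ← stateCount_hang]
  exact (succIso n).stateCount_eq (x := .inr 1) s'

end MetaHex

namespace PowerSeries

theorem mul_mk_eq_of_recurrence {R : Type*} [CommRing R] {u : ℕ → R} {p q r : R}
    (h : ∀ n, u (n + 3) = p * u (n + 2) + q * u (n + 1) + r * u n) :
    (1 - C p * X - C q * X ^ 2 - C r * X ^ 3) * mk u =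
      C (u 0) + C (u 1 - p * u 0) * X + C (u 2 - p * u 1 - q * u 0) * X ^ 2 := by
  ext (_ | _ | _ | n) <;> simp [sub_mul, mul_assoc, coeff_X_pow_mul', coeff_X_pow, coeff_C]
  linear_combination h n

end PowerSeries

section

open MetaHex

theorem numIDSMetaHex_eq (n : ℕ) :
    numIDSMetaHex n =
      (metaHex n).stateCount (lastCut n) 0 + (metaHex n).stateCount (lastCut n) 1 :=
  SimpleGraph.card_isIndepDomSet_eq_stateCount_add _ _

theorem numIDSMetaHex_add_three (n : ℕ) :
    numIDSMetaHex (n + 3) =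
      3 * numIDSMetaHex (n + 2) + numIDSMetaHex (n + 1) + 2 * numIDSMetaHex n := by
  simp only [numIDSMetaHex_eq, stateCount_succ, Fin.sum_univ_three, Matrix.cons_val',
    Matrix.cons_val_zero, Matrix.cons_val_one, Matrix.cons_val, Matrix.cons_val_fin_one]
  ring

theorem numIDSMetaHex_zero : numIDSMetaHex 0 = 1 := by
  simp [numIDSMetaHex_eq, stateCount_zero]

theorem numIDSMetaHex_one : numIDSMetaHex 1 = 5 := by
  simp [numIDSMetaHex_eq, stateCount_succ, stateCount_zero, Fin.sum_univ_three]

theorem numIDSMetaHex_two : numIDSMetaHex 2 = 19 := by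
  simp [numIDSMetaHex_eq, stateCount_succ, stateCount_zero, Fin.sum_univ_three]

end

/-- In `ℚ⟦X⟧`, `(1 - 3X - X² - 2X³) · ∑_{n≥0} m_n Xⁿ = 1 + 2X + 3X²`, where `m n`
is the number of independent dominating sets of `M n` (and `m 0 = 1`, `M 0` being
the one-vertex graph). -/
theorem numIDSMetaHex_generating_function :
    (1 - 3 * PowerSeries.X - PowerSeries.X ^ 2 - 2 * PowerSeries.X ^ 3) *
        PowerSeries.mk (fun n : ℕ => (numIDSMetaHex n : ℚ)) =
      1 + 2 * PowerSeries.X + 3 * PowerSeries.X ^ 2 := by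
  have h := PowerSeries.mul_mk_eq_of_recurrence (u := fun n => (numIDSMetaHex n : ℚ))
    (p := 3) (q := 1) (r := 2) fun n => by push_cast [numIDSMetaHex_add_three]; ring
  norm_num [numIDSMetaHex_zero, numIDSMetaHex_one, numIDSMetaHex_two] at h
  exact h
end
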